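/- arXiv:2601.18175 — 3 statements merged into one kernel-verified Lean document; each statement's English description precedes it below -/
import Mathlib

section
/- Statewise policy improvement: for every nonterminal state s, V_{π₊}(s) ≥ V_{π0}(s)·(1 + I(s)); equivalently, (V_{π₊}(s) − V_{π0}(s))/V_{π0}(s) ≥ I(s) ≥ 0. -/
open MeasureTheory
open scoped ENNReal

/-- A pmf on a finite type, as a real-valued function. -/
def IsPMFOn {α : Type*} [Fintype α] (p : α → ℝ) : Prop :=
  (∀ x, 0 ≤ p x) ∧ ∑ x, p x = 1

/-- A terminated trajectory of an episodic MDP: the initial state together with the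
list of (action, next-state) steps, recorded up to the first visit to a terminal
state.  Under almost-sure termination this is a faithful (countable) sample space
for the Ionescu–Tulcea law of the chain, terminal states being absorbing. -/
structure Traj (S A : Type*) where
  init : S
  steps : List (A × S)

instance {S A : Type*} : MeasurableSpace (Traj S A) := ⊤

variable {S A : Type*}

/-- The last recorded state of a trajectory. -/
def lastState (ω : Traj S A) : S := ω.steps.foldl (fun _ p => p.2) ω.init

/-- The state `Xₜ` at time `t` (after termination the chain is absorbed, so we
return the last recorded state). -/
def stateAt (ω : Traj S A) (t : ℕ) : S :=
  (ω.init :: ω.steps.map Prod.snd).getD t (lastState ω)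

/-- The action `Aₜ` at time `t`, defined (as `some a`) for `t` before the
termination time. -/
def actionAt (ω : Traj S A) (t : ℕ) : Option A := ω.steps[t]?.map Prod.fst

/-- Probability weight of a path started at `s`: the product of the policy and
transition probabilities along the path, the path being required to stop exactly
on first reaching the terminal set `Term`. -/
def pathWeight [DecidableEq S] (Term : Finset S) (P : S → A → S → ℝ)
    (π : S → A → ℝ) : S → List (A × S) → ℝ
  | s, [] => if s ∈ Term then 1 else 0
  | s, (a, s') :: l =>
      if s ∈ Term then 0 else π s a * P s a s' * pathWeight Term P π s' l

/-- The law `ℙ_{π,μ}` of the episodic chain `X₀ ~ μ, Aₜ ~ π(·|Xₜ),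
X_{t+1} ~ P(·|Xₜ,Aₜ)` with terminal set `Term`, as a measure on terminated
trajectories.  When the chain reaches `Term` almost surely this is a probability
measure and is the (pushforward of the) Ionescu–Tulcea trajectory law. -/
noncomputable def trajMeasure [DecidableEq S] (Term : Finset S) (P : S → A → S → ℝ)
    (π : S → A → ℝ) (μ : S → ℝ) : Measure (Traj S A) :=
  Measure.sum fun ω : Traj S A =>
    ENNReal.ofReal (μ ω.init * pathWeight Term P π ω.init ω.steps) • Measure.dirac ω

/-- The success event `{∃ t, Xₜ ∈ 𝒯₊}`. -/
def SuccessEvent (Tp : Finset S) : Set (Traj S A) := {ω | ∃ t, stateAt ω t ∈ Tp}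

/-- The point mass at `s`, as an initial distribution. -/
def pointMass [DecidableEq S] (s : S) : S → ℝ := fun s' => if s' = s then 1 else 0

/-- The value `V_π(s) := ℙ_{π,s}(∃ t, Xₜ ∈ 𝒯₊)`. -/
noncomputable def Vval [DecidableEq S] (Term Tp : Finset S) (P : S → A → S → ℝ)
    (π : S → A → ℝ) (s : S) : ℝ :=
  (trajMeasure Term P π (pointMass s) (SuccessEvent Tp)).toReal

/-- The Q-value `Q_π(s,a) := Σ_{s'} P(s'|s,a)·V_π(s')`. -/
noncomputable def Qval [Fintype S] [DecidableEq S] (Term Tp : Finset S)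
    (P : S → A → S → ℝ) (π : S → A → ℝ) (s : S) (a : A) : ℝ :=
  ∑ s', P s a s' * Vval Term Tp P π s'

/-- The success-conditioned policy `π₊(a|s) := π0(a|s)·Q_{π0}(s,a)/V_{π0}(s)`. -/
noncomputable def piPlus [Fintype S] [DecidableEq S] (Term Tp : Finset S)
    (P : S → A → S → ℝ) (π0 : S → A → ℝ) : S → A → ℝ :=
  fun s a => π0 s a * Qval Term Tp P π0 s a / Vval Term Tp P π0 s

/-- The action-influence
`I(s) := Σ_a π0(a|s)·((Q_{π0}(s,a) − V_{π0}(s))/V_{π0}(s))²`. -/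
noncomputable def influence [Fintype S] [DecidableEq S] [Fintype A] (Term Tp : Finset S)
    (P : S → A → S → ℝ) (π0 : S → A → ℝ) (s : S) : ℝ :=
  ∑ a, π0 s a * ((Qval Term Tp P π0 s a - Vval Term Tp P π0 s)
      / Vval Term Tp P π0 s) ^ 2

/-- The occupancy measure `d_π(s) := Σ_{t≥0} ℙ_{π,μ}(Xₜ = s)` (in `ℝ≥0∞`). -/
noncomputable def dOcc [DecidableEq S] (Term : Finset S) (P : S → A → S → ℝ)
    (π : S → A → ℝ) (μ : S → ℝ) (s : S) : ℝ≥0∞ :=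
  ∑' t : ℕ, trajMeasure Term P π μ {ω | stateAt ω t = s}

/-- The success-conditioned occupancy
`d⁺_π(s) := 𝔼_{π,μ}[Σ_{t≥0} 1(Xₜ = s) | ∃ t, Xₜ ∈ 𝒯₊]` (in `ℝ≥0∞`). -/
noncomputable def dPlusOcc [DecidableEq S] (Term Tp : Finset S) (P : S → A → S → ℝ)
    (π : S → A → ℝ) (μ : S → ℝ) (s : S) : ℝ≥0∞ :=
  ∫⁻ ω, (∑' t : ℕ, if stateAt ω t = s then 1 else 0)
    ∂ (ProbabilityTheory.cond (trajMeasure Term P π μ) (SuccessEvent Tp))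

/-- Log-likelihood `Σ_{t<T} log π(Aₜ|Xₜ)` of the recorded path under policy `π`. -/
noncomputable def pathLogLik (π : S → A → ℝ) : S → List (A × S) → ℝ
  | _, [] => 0
  | s, (a, s') :: l => Real.log (π s a) + pathLogLik π s' l

/-- The cross-entropy loss
`ℓ(π) := 𝔼_{π0,μ}[ −Σ_{t<T} log π(Aₜ|Xₜ) | ∃ t, Xₜ ∈ 𝒯₊ ]`. -/
noncomputable def xent [DecidableEq S] (Term Tp : Finset S) (P : S → A → S → ℝ)
    (π0 : S → A → ℝ) (μ : S → ℝ) (π : S → A → ℝ) : ℝ :=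
  ∫ ω, -(pathLogLik π ω.init ω.steps)
    ∂ (ProbabilityTheory.cond (trajMeasure Term P π0 μ) (SuccessEvent Tp))

/-!
Let `V_π^n(s)` be the probability of succeeding within `n` steps. It increases to `V_π(s)` and
obeys the finite-horizon Bellman recursion `V_π^{n+1} = B_π V_π^n` off `𝒯`. By induction on `n`,
`(V_{π0}^n)² ≤ V_{π0} · V_{π₊}^n`: Jensen over actions and Cauchy–Schwarz over successor states
turn one Bellman step of `π0` into one of `π₊ ∝ π0 · Q_{π0}`. In the limit `V_{π0} ≤ V_{π₊}`, so
  `V_{π₊}(s) = Σ_a π₊(a|s) Q_{π₊}(s,a) ≥ Σ_a π₊(a|s) Q_{π0}(s,a)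
    = Σ_a π0(a|s) Q_{π0}(s,a)² / V_{π0}(s)`,
which is `V_{π0}(s) (1 + I(s))` by the variance identity for `Q_{π0}(s,·)` under `π0(·|s)`.
-/

open Finset Filter Topology

section Paths

lemma lastState_cons (s : S) (p : A × S) (l : List (A × S)) :
    lastState (⟨s, p :: l⟩ : Traj S A) = lastState (⟨p.2, l⟩ : Traj S A) := rfl

lemma stateAt_nil (s : S) (t : ℕ) : stateAt (⟨s, []⟩ : Traj S A) t = s := by
  cases t <;> rfl

lemma stateAt_cons_succ (s : S) (p : A × S) (l : List (A × S)) (t : ℕ) :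
    stateAt (⟨s, p :: l⟩ : Traj S A) (t + 1) = stateAt (⟨p.2, l⟩ : Traj S A) t := by
  simp [stateAt, lastState_cons]

variable [DecidableEq S] {T Tp : Finset S} {P : S → A → S → ℝ} {π : S → A → ℝ}

/-- A path of nonzero weight meets `T` only at its last state. -/
lemma exists_stateAt_mem_iff_lastState_mem (hTp : Tp ⊆ T) :
    ∀ {s : S} {l : List (A × S)}, pathWeight T P π s l ≠ 0 →
      ((∃ t, stateAt (⟨s, l⟩ : Traj S A) t ∈ Tp) ↔ lastState (⟨s, l⟩ : Traj S A) ∈ Tp)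
  | s, [], _ => by simp [stateAt_nil, lastState]
  | s, (a, s') :: l, hw => by
      have hs : s ∉ T := fun h => hw (by simp [pathWeight, h])
      have hw' : pathWeight T P π s' l ≠ 0 := fun h => hw (by simp [pathWeight, h])
      rw [lastState_cons, ← exists_stateAt_mem_iff_lastState_mem hTp hw']
      constructor
      · rintro ⟨_ | t, ht⟩
        · exact absurd (hTp ht) hs
        · exact ⟨t, by rwa [stateAt_cons_succ] at ht⟩
      · rintro ⟨t, ht⟩
        exact ⟨t + 1, by rwa [stateAt_cons_succ]⟩

end Paths

namespace ENNReal

variable {α : Type*}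

lemma tsum_list_eq_add (f : List α → ℝ≥0∞) :
    ∑' l, f l = f [] + ∑' (x : α) (l : List α), f (x :: l) := by
  classical
  rw [ENNReal.tsum_eq_add_tsum_ite [],
    ← ENNReal.tsum_prod' (f := fun p : α × List α => f (p.1 :: p.2))]
  congr 1
  refine (Function.Injective.tsum_eq (g := fun p : α × List α => p.1 :: p.2)
    (fun p q h => Prod.ext (List.cons.inj h).1 (List.cons.inj h).2) ?_).symm.trans ?_
  · rintro (_ | ⟨x, l⟩) h
    · simp at h
    · exact ⟨(x, l), rfl⟩
  · simp

lemma tsum_eq_iSup_tsum_ite_le (g : α → ℕ) (f : α → ℝ≥0∞) :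
    ∑' x, f x = ⨆ n, ∑' x, if g x ≤ n then f x else 0 := by
  refine le_antisymm ?_ (iSup_le fun n => ENNReal.tsum_le_tsum fun x => ?_)
  · rw [ENNReal.tsum_eq_iSup_sum]
    refine iSup_le fun F => le_iSup_of_le (F.sup g) ?_
    calc ∑ x ∈ F, f x = ∑ x ∈ F, if g x ≤ F.sup g then f x else 0 :=
          sum_congr rfl fun x hx => (if_pos (le_sup hx)).symm
      _ ≤ _ := ENNReal.sum_le_tsum F
  · split_ifs <;> simp

lemma monotone_tsum_ite_le (g : α → ℕ) (f : α → ℝ≥0∞) :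
    Monotone fun n => ∑' x, if g x ≤ n then f x else 0 := fun m n hmn =>
  ENNReal.tsum_le_tsum fun x => by
    split_ifs with h₁ h₂
    exacts [le_rfl, absurd (h₁.trans hmn) h₂, zero_le, le_rfl]

end ENNReal

section SuccessMass

variable [DecidableEq S] (T Tp : Finset S) (P : S → A → S → ℝ) (π : S → A → ℝ)

noncomputable def successWeight (s : S) (l : List (A × S)) : ℝ≥0∞ :=
  if lastState (⟨s, l⟩ : Traj S A) ∈ Tp then ENNReal.ofReal (pathWeight T P π s l) else 0

/-- The probability `ℙ_{π,s}(Xₜ ∈ 𝒯₊ for some t ≤ n)`. -/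
noncomputable def successMass (n : ℕ) (s : S) : ℝ≥0∞ :=
  ∑' l : List (A × S), if l.length ≤ n then successWeight T Tp P π s l else 0

variable {T Tp P π}

lemma successWeight_nil (hTp : Tp ⊆ T) (s : S) :
    successWeight T Tp P π s [] = if s ∈ Tp then 1 else 0 := by
  by_cases hs : s ∈ Tp
  · simp [successWeight, lastState, pathWeight, hs, hTp hs]
  · simp [successWeight, lastState, hs]

lemma successWeight_cons_of_mem {s : S} (hs : s ∈ T) (p : A × S) (l : List (A × S)) :
    successWeight T Tp P π s (p :: l) = 0 := by
  simp [successWeight, pathWeight, hs]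

lemma successWeight_cons_of_notMem {s : S} (hs : s ∉ T) {a : A} {s' : S}
    (hπP : 0 ≤ π s a * P s a s') (l : List (A × S)) :
    successWeight T Tp P π s ((a, s') :: l)
      = ENNReal.ofReal (π s a * P s a s') * successWeight T Tp P π s' l := by
  simp only [successWeight, pathWeight, if_neg hs, lastState_cons, ENNReal.ofReal_mul hπP,
    mul_ite, mul_zero]

lemma trajMeasure_pointMass_successEvent (hTp : Tp ⊆ T) (s : S) :
    trajMeasure T P π (pointMass s) (SuccessEvent Tp) = ∑' l, successWeight T Tp P π s l := by
  rw [trajMeasure, Measure.sum_apply _ MeasurableSpace.measurableSet_top]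
  refine (Function.Injective.tsum_eq (g := fun l : List (A × S) => (⟨s, l⟩ : Traj S A))
    (fun l l' h => congrArg Traj.steps h) ?_).symm.trans (tsum_congr fun l => ?_)
  · rintro ⟨s₀, l⟩ hω
    obtain rfl : s₀ = s := by
      by_contra h
      simp [pointMass, h] at hω
    exact ⟨l, rfl⟩
  · rw [Measure.smul_apply, Measure.dirac_apply' _ MeasurableSpace.measurableSet_top, smul_eq_mul]
    simp only [pointMass, if_true, one_mul, successWeight]
    by_cases hw : pathWeight T P π s l = 0
    · simp [hw]
    · have hiff := exists_stateAt_mem_iff_lastState_mem hTp hw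
      by_cases h : lastState (⟨s, l⟩ : Traj S A) ∈ Tp
      · rw [Set.indicator_of_mem (show _ ∈ SuccessEvent Tp from hiff.2 h), if_pos h]
        simp
      · rw [Set.indicator_of_notMem (show _ ∉ SuccessEvent Tp from mt hiff.1 h), if_neg h]
        simp

lemma successMass_zero (hTp : Tp ⊆ T) (s : S) :
    successMass T Tp P π 0 s = if s ∈ Tp then 1 else 0 := by
  rw [successMass, tsum_eq_single [] fun l hl => by simp [List.length_eq_zero_iff, hl]]
  simp [successWeight_nil hTp]

lemma successMass_of_mem (hTp : Tp ⊆ T) {s : S} (hs : s ∈ T) (n : ℕ) :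
    successMass T Tp P π n s = if s ∈ Tp then 1 else 0 := by
  rw [successMass, tsum_eq_single [] fun l hl => ?_]
  · simp [successWeight_nil hTp]
  · obtain ⟨p, l, rfl⟩ := List.exists_cons_of_ne_nil hl
    simp [successWeight_cons_of_mem hs]

lemma successMass_succ [Fintype S] [Fintype A] (hTp : Tp ⊆ T) {s : S} (hs : s ∉ T)
    (hπ : ∀ a, 0 ≤ π s a) (hP : ∀ a s', 0 ≤ P s a s') (n : ℕ) :
    successMass T Tp P π (n + 1) s
      = ∑ a, ∑ s', ENNReal.ofReal (π s a * P s a s') * successMass T Tp P π n s' := by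
  have hsTp : s ∉ Tp := fun h => hs (hTp h)
  rw [successMass, ENNReal.tsum_list_eq_add, ENNReal.tsum_prod', tsum_fintype]
  simp only [successWeight_nil hTp, if_neg hsTp, ite_self, zero_add, List.length_cons,
    Nat.add_le_add_iff_right, tsum_fintype]
  refine sum_congr rfl fun a _ => sum_congr rfl fun s' _ => ?_
  simp only [successWeight_cons_of_notMem hs (mul_nonneg (hπ a) (hP a s'))]
  rw [successMass, ← ENNReal.tsum_mul_left]
  simp only [mul_ite, mul_zero]

lemma successMass_le_one [Fintype S] [Fintype A] (hTp : Tp ⊆ T)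
    (hπ : ∀ s ∉ T, IsPMFOn (π s)) (hP : ∀ s a, IsPMFOn (P s a)) (n : ℕ) (s : S) :
    successMass T Tp P π n s ≤ 1 := by
  induction n generalizing s with
  | zero => rw [successMass_zero hTp]; split_ifs <;> simp
  | succ n ih =>
    by_cases hs : s ∈ T
    · rw [successMass_of_mem hTp hs]; split_ifs <;> simp
    have hπP : ∀ a s', 0 ≤ π s a * P s a s' :=
      fun a s' => mul_nonneg ((hπ s hs).1 a) ((hP s a).1 s')
    calc successMass T Tp P π (n + 1) s
        = ∑ a, ∑ s', ENNReal.ofReal (π s a * P s a s') * successMass T Tp P π n s' :=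
          successMass_succ hTp hs (hπ s hs).1 (fun a => (hP s a).1) n
      _ ≤ ∑ a, ∑ s', ENNReal.ofReal (π s a * P s a s') := by
          gcongr with a _ s' _
          exact mul_le_of_le_one_right' (ih s')
      _ = 1 := by
          rw [← ENNReal.ofReal_one, ← (hπ s hs).2,
            ENNReal.ofReal_sum_of_nonneg fun a _ => (hπ s hs).1 a]
          refine sum_congr rfl fun a _ => ?_
          rw [← ENNReal.ofReal_sum_of_nonneg fun s' _ => hπP a s', ← mul_sum, (hP s a).2, mul_one]

lemma trajMeasure_pointMass_successEvent_eq_iSup (hTp : Tp ⊆ T) (s : S) :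
    trajMeasure T P π (pointMass s) (SuccessEvent Tp) = ⨆ n, successMass T Tp P π n s := by
  rw [trajMeasure_pointMass_successEvent hTp, ENNReal.tsum_eq_iSup_tsum_ite_le List.length]
  rfl

lemma monotone_successMass (s : S) : Monotone fun n => successMass T Tp P π n s :=
  ENNReal.monotone_tsum_ite_le _ _

end SuccessMass

section Bellman

variable [Fintype S]

def actionValue (P : S → A → S → ℝ) (v : S → ℝ) (s : S) (a : A) : ℝ := ∑ s', P s a s' * v s'

variable [Fintype A]

def bellman (P : S → A → S → ℝ) (π : S → A → ℝ) (v : S → ℝ) (s : S) : ℝ :=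
  ∑ a, π s a * actionValue P v s a

lemma continuous_bellman (P : S → A → S → ℝ) (π : S → A → ℝ) (s : S) :
    Continuous fun v => bellman P π v s := by
  unfold bellman actionValue
  fun_prop

end Bellman

section ValueIteration

variable [DecidableEq S] (T Tp : Finset S) (P : S → A → S → ℝ) (π : S → A → ℝ)

noncomputable def Vtrunc (n : ℕ) (s : S) : ℝ := (successMass T Tp P π n s).toReal

variable {T Tp P π}

lemma Vtrunc_zero (hTp : Tp ⊆ T) (s : S) : Vtrunc T Tp P π 0 s = if s ∈ Tp then 1 else 0 := by
  rw [Vtrunc, successMass_zero hTp]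
  split_ifs <;> simp

lemma Vtrunc_of_mem (hTp : Tp ⊆ T) {s : S} (hs : s ∈ T) (n : ℕ) :
    Vtrunc T Tp P π n s = if s ∈ Tp then 1 else 0 := by
  rw [Vtrunc, successMass_of_mem hTp hs]
  split_ifs <;> simp

lemma Vtrunc_nonneg (n : ℕ) (s : S) : 0 ≤ Vtrunc T Tp P π n s := ENNReal.toReal_nonneg

lemma Vval_nonneg {s : S} : 0 ≤ Vval T Tp P π s := ENNReal.toReal_nonneg

variable [Fintype S] [Fintype A]

lemma successMass_iSup_ne_top (hTp : Tp ⊆ T) (hπ : ∀ s ∉ T, IsPMFOn (π s))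
    (hP : ∀ s a, IsPMFOn (P s a)) (s : S) : ⨆ n, successMass T Tp P π n s ≠ ⊤ :=
  ne_top_of_le_ne_top ENNReal.one_ne_top (iSup_le fun n => successMass_le_one hTp hπ hP n s)

lemma Vtrunc_succ (hTp : Tp ⊆ T) (hπ : ∀ s ∉ T, IsPMFOn (π s)) (hP : ∀ s a, IsPMFOn (P s a))
    {s : S} (hs : s ∉ T) (n : ℕ) :
    Vtrunc T Tp P π (n + 1) s = bellman P π (Vtrunc T Tp P π n) s := by
  have hπP : ∀ a s', 0 ≤ π s a * P s a s' :=
    fun a s' => mul_nonneg ((hπ s hs).1 a) ((hP s a).1 s')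
  have hfin : ∀ s', successMass T Tp P π n s' ≠ ⊤ :=
    fun s' => ne_top_of_le_ne_top ENNReal.one_ne_top (successMass_le_one hTp hπ hP n s')
  rw [Vtrunc, successMass_succ hTp hs (hπ s hs).1 (fun a => (hP s a).1) n,
    ENNReal.toReal_sum fun a _ => ENNReal.sum_ne_top.2 fun s' _ =>
      ENNReal.mul_ne_top ENNReal.ofReal_ne_top (hfin s')]
  refine sum_congr rfl fun a _ => ?_
  rw [ENNReal.toReal_sum fun s' _ => ENNReal.mul_ne_top ENNReal.ofReal_ne_top (hfin s'),
    actionValue, mul_sum]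
  refine sum_congr rfl fun s' _ => ?_
  rw [ENNReal.toReal_mul, ENNReal.toReal_ofReal (hπP a s'), Vtrunc, mul_assoc]

lemma tendsto_Vtrunc (hTp : Tp ⊆ T) (hπ : ∀ s ∉ T, IsPMFOn (π s)) (hP : ∀ s a, IsPMFOn (P s a))
    (s : S) :
    Tendsto (fun n => Vtrunc T Tp P π n s) atTop (𝓝 (Vval T Tp P π s)) := by
  rw [Vval, trajMeasure_pointMass_successEvent_eq_iSup hTp]
  exact (ENNReal.tendsto_toReal (successMass_iSup_ne_top hTp hπ hP s)).comp
    (tendsto_atTop_iSup (monotone_successMass s))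

lemma Vval_eq_bellman (hTp : Tp ⊆ T) (hπ : ∀ s ∉ T, IsPMFOn (π s)) (hP : ∀ s a, IsPMFOn (P s a))
    {s : S} (hs : s ∉ T) : Vval T Tp P π s = bellman P π (Vval T Tp P π) s := by
  refine tendsto_nhds_unique ((tendsto_add_atTop_iff_nat 1).2 (tendsto_Vtrunc hTp hπ hP s)) ?_
  simp_rw [Vtrunc_succ hTp hπ hP hs]
  exact ((continuous_bellman P π s).tendsto _).comp
    (tendsto_pi_nhds.2 (tendsto_Vtrunc hTp hπ hP))

end ValueIteration

lemma sum_mul_sq_eq_sq_mul_one_add {ι : Type*} [Fintype ι] {p q : ι → ℝ} {v : ℝ} (hv : v ≠ 0)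
    (hp : ∑ i, p i = 1) (hpq : ∑ i, p i * q i = v) :
    ∑ i, p i * q i ^ 2 = v ^ 2 * (1 + ∑ i, p i * ((q i - v) / v) ^ 2) := by
  have hdev : ∑ i, p i * ((q i - v) / v) ^ 2
      = (∑ i, p i * q i ^ 2) / v ^ 2 - 2 * (∑ i, p i * q i) / v + ∑ i, p i := by
    simp only [sum_div, mul_sum, ← sum_sub_distrib, ← sum_add_distrib]
    exact sum_congr rfl fun i _ => by field_simp; ring
  rw [hdev, hp, hpq]
  field_simp
  ring

section Improvement

variable [Fintype S]

lemma actionValue_nonneg {P : S → A → S → ℝ} {v : S → ℝ} {s : S} {a : A}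
    (hP : ∀ s', 0 ≤ P s a s') (hv : ∀ s', 0 ≤ v s') : 0 ≤ actionValue P v s a :=
  sum_nonneg fun s' _ => mul_nonneg (hP s') (hv s')

lemma sq_actionValue_le {P : S → A → S → ℝ} {u v w : S → ℝ} {s : S} {a : A}
    (hP : ∀ s', 0 ≤ P s a s') (hv : ∀ s', 0 ≤ v s') (hw : ∀ s', 0 ≤ w s')
    (huvw : ∀ s', u s' ^ 2 ≤ v s' * w s') :
    actionValue P u s a ^ 2 ≤ actionValue P v s a * actionValue P w s a :=
  sum_sq_le_sum_mul_sum_of_sq_le_mul _ (fun s' _ => mul_nonneg (hP s') (hv s'))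
    (fun s' _ => mul_nonneg (hP s') (hw s')) fun s' _ =>
      calc (P s a s' * u s') ^ 2 = P s a s' ^ 2 * u s' ^ 2 := mul_pow _ _ _
        _ ≤ P s a s' ^ 2 * (v s' * w s') := by gcongr; exact huvw s'
        _ = P s a s' * v s' * (P s a s' * w s') := by ring

variable [Fintype A]

lemma bellman_mono {P : S → A → S → ℝ} {π : S → A → ℝ} {v w : S → ℝ} {s : S}
    (hπ : ∀ a, 0 ≤ π s a) (hP : ∀ a s', 0 ≤ P s a s') (hvw : v ≤ w) :
    bellman P π v s ≤ bellman P π w s := by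
  unfold bellman actionValue
  gcongr with a _ s' _
  exacts [hπ a, hP a s', hvw s']

lemma sq_bellman_le {P : S → A → S → ℝ} {π : S → A → ℝ} {u v w : S → ℝ} {s : S}
    (hπ : IsPMFOn (π s)) (hP : ∀ a s', 0 ≤ P s a s') (hv : ∀ s', 0 ≤ v s')
    (hw : ∀ s', 0 ≤ w s') (huvw : ∀ s', u s' ^ 2 ≤ v s' * w s') :
    bellman P π u s ^ 2 ≤ ∑ a, π s a * (actionValue P v s a * actionValue P w s a) := by
  have h := sum_sq_le_sum_mul_sum_of_sq_le_mul univ (fun a _ => hπ.1 a)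
    (fun a _ => mul_nonneg (hπ.1 a) (mul_nonneg (actionValue_nonneg (hP a) hv)
      (actionValue_nonneg (hP a) hw)))
    fun a _ => show (π s a * actionValue P u s a) ^ 2 ≤ _ from
      calc (π s a * actionValue P u s a) ^ 2 = π s a ^ 2 * actionValue P u s a ^ 2 := mul_pow _ _ _
        _ ≤ π s a ^ 2 * (actionValue P v s a * actionValue P w s a) := by
          gcongr; exact sq_actionValue_le (hP a) hv hw huvw
        _ = π s a * (π s a * (actionValue P v s a * actionValue P w s a)) := by ring
  rwa [hπ.2, one_mul] at h

variable [DecidableEq S] {T Tp : Finset S} {P : S → A → S → ℝ} {π0 : S → A → ℝ}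

lemma Vval_of_mem (hTp : Tp ⊆ T) (hπ0 : ∀ s ∉ T, IsPMFOn (π0 s)) (hP : ∀ s a, IsPMFOn (P s a))
    {s : S} (hs : s ∈ T) : Vval T Tp P π0 s = if s ∈ Tp then 1 else 0 := by
  refine tendsto_nhds_unique (tendsto_Vtrunc hTp hπ0 hP s) ?_
  simp_rw [Vtrunc_of_mem hTp hs]
  exact tendsto_const_nhds

lemma sum_mul_Qval_eq_Vval (hTp : Tp ⊆ T) (hπ0 : ∀ s ∉ T, IsPMFOn (π0 s))
    (hP : ∀ s a, IsPMFOn (P s a)) {s : S} (hs : s ∉ T) :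
    ∑ a, π0 s a * Qval T Tp P π0 s a = Vval T Tp P π0 s :=
  (Vval_eq_bellman hTp hπ0 hP hs).symm

lemma Vval_mul_bellman_piPlus {s : S} (hV : Vval T Tp P π0 s ≠ 0) (w : S → ℝ) :
    Vval T Tp P π0 s * bellman P (piPlus T Tp P π0) w s
      = ∑ a, π0 s a * (Qval T Tp P π0 s a * actionValue P w s a) := by
  rw [bellman, mul_sum]
  refine sum_congr rfl fun a _ => ?_
  simp only [piPlus]
  field_simp

lemma isPMFOn_piPlus (hTp : Tp ⊆ T) (hπ0 : ∀ s ∉ T, IsPMFOn (π0 s))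
    (hP : ∀ s a, IsPMFOn (P s a)) {s : S} (hs : s ∉ T) (hV : 0 < Vval T Tp P π0 s) :
    IsPMFOn (piPlus T Tp P π0 s) := by
  refine ⟨fun a => div_nonneg (mul_nonneg ((hπ0 s hs).1 a)
    (actionValue_nonneg (hP s a).1 fun _ => Vval_nonneg)) hV.le, ?_⟩
  simp only [piPlus]
  rw [← sum_div, sum_mul_Qval_eq_Vval hTp hπ0 hP hs, div_self hV.ne']

lemma sq_Vtrunc_le_Vval_mul_Vtrunc_piPlus (hTp : Tp ⊆ T) (hπ0 : ∀ s ∉ T, IsPMFOn (π0 s))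
    (hP : ∀ s a, IsPMFOn (P s a)) (hV0 : ∀ s ∉ T, 0 < Vval T Tp P π0 s) (n : ℕ) (s : S) :
    Vtrunc T Tp P π0 n s ^ 2 ≤ Vval T Tp P π0 s * Vtrunc T Tp P (piPlus T Tp P π0) n s := by
  have hπplus : ∀ s ∉ T, IsPMFOn (piPlus T Tp P π0 s) :=
    fun s hs => isPMFOn_piPlus hTp hπ0 hP hs (hV0 s hs)
  have hterminal : ∀ n, ∀ s ∈ T,
      Vtrunc T Tp P π0 n s ^ 2 ≤ Vval T Tp P π0 s * Vtrunc T Tp P (piPlus T Tp P π0) n s := by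
    intro n s hs
    rw [Vtrunc_of_mem hTp hs, Vtrunc_of_mem hTp hs, Vval_of_mem hTp hπ0 hP hs]
    exact (sq _).le
  induction n generalizing s with
  | zero =>
    by_cases hs : s ∈ T
    · exact hterminal 0 s hs
    rw [Vtrunc_zero hTp, if_neg fun h => hs (hTp h), zero_pow two_ne_zero]
    exact mul_nonneg Vval_nonneg (Vtrunc_nonneg 0 s)
  | succ n ih =>
    by_cases hs : s ∈ T
    · exact hterminal _ s hs
    rw [Vtrunc_succ hTp hπ0 hP hs, Vtrunc_succ hTp hπplus hP hs,
      Vval_mul_bellman_piPlus (hV0 s hs).ne']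
    exact sq_bellman_le (hπ0 s hs) (fun a => (hP s a).1) (fun _ => Vval_nonneg)
      (Vtrunc_nonneg n) ih

lemma Vval_le_Vval_piPlus (hTp : Tp ⊆ T) (hπ0 : ∀ s ∉ T, IsPMFOn (π0 s))
    (hP : ∀ s a, IsPMFOn (P s a)) (hV0 : ∀ s ∉ T, 0 < Vval T Tp P π0 s) (s : S) :
    Vval T Tp P π0 s ≤ Vval T Tp P (piPlus T Tp P π0) s := by
  have hπplus : ∀ s ∉ T, IsPMFOn (piPlus T Tp P π0 s) :=
    fun s hs => isPMFOn_piPlus hTp hπ0 hP hs (hV0 s hs)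
  have hsq : Vval T Tp P π0 s ^ 2 ≤ Vval T Tp P π0 s * Vval T Tp P (piPlus T Tp P π0) s :=
    le_of_tendsto_of_tendsto' ((tendsto_Vtrunc hTp hπ0 hP s).pow 2)
      ((tendsto_Vtrunc hTp hπplus hP s).const_mul _)
      fun n => sq_Vtrunc_le_Vval_mul_Vtrunc_piPlus hTp hπ0 hP hV0 n s
  rcases (Vval_nonneg : 0 ≤ Vval T Tp P π0 s).eq_or_lt with h | h
  · exact h ▸ Vval_nonneg
  · exact le_of_mul_le_mul_left (by rwa [← sq]) h

lemma Vval_mul_one_add_influence_le (hTp : Tp ⊆ T) (hπ0 : ∀ s ∉ T, IsPMFOn (π0 s))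
    (hP : ∀ s a, IsPMFOn (P s a)) (hV0 : ∀ s ∉ T, 0 < Vval T Tp P π0 s) {s : S} (hs : s ∉ T) :
    Vval T Tp P π0 s * (1 + influence T Tp P π0 s) ≤ Vval T Tp P (piPlus T Tp P π0) s := by
  have hV := hV0 s hs
  have hπplus : ∀ s ∉ T, IsPMFOn (piPlus T Tp P π0 s) :=
    fun s hs => isPMFOn_piPlus hTp hπ0 hP hs (hV0 s hs)
  refine le_of_mul_le_mul_left ?_ hV
  calc Vval T Tp P π0 s * (Vval T Tp P π0 s * (1 + influence T Tp P π0 s))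
      = ∑ a, π0 s a * Qval T Tp P π0 s a ^ 2 := by
        rw [sum_mul_sq_eq_sq_mul_one_add hV.ne' (hπ0 s hs).2
          (sum_mul_Qval_eq_Vval hTp hπ0 hP hs), influence]
        ring
    _ = Vval T Tp P π0 s * bellman P (piPlus T Tp P π0) (Vval T Tp P π0) s := by
        rw [Vval_mul_bellman_piPlus hV.ne']
        simp only [sq]
        rfl
    _ ≤ Vval T Tp P π0 s * bellman P (piPlus T Tp P π0) (Vval T Tp P (piPlus T Tp P π0)) s := by
        gcongr
        exact bellman_mono (hπplus s hs).1 (fun a => (hP s a).1)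
          (Vval_le_Vval_piPlus hTp hπ0 hP hV0)
    _ = Vval T Tp P π0 s * Vval T Tp P (piPlus T Tp P π0) s := by
        rw [← Vval_eq_bellman hTp hπplus hP hs]

end Improvement

theorem statewise_policy_improvement_general
    {S A : Type*} [Fintype S] [DecidableEq S] [Fintype A]
    (T Tp Tm : Finset S) (hpart : Tp ∪ Tm = T)
    (P : S → A → S → ℝ) (hP : ∀ s a, IsPMFOn (P s a))
    (π0 : S → A → ℝ) (hπ0 : ∀ s ∉ T, IsPMFOn (π0 s))
    (hV0 : ∀ s ∉ T, 0 < Vval T Tp P π0 s) :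
    ∀ s ∉ T,
      Vval T Tp P (piPlus T Tp P π0) s
          ≥ Vval T Tp P π0 s * (1 + influence T Tp P π0 s)
      ∧ (Vval T Tp P (piPlus T Tp P π0) s - Vval T Tp P π0 s) / Vval T Tp P π0 s
          ≥ influence T Tp P π0 s
      ∧ influence T Tp P π0 s ≥ 0 := by
  intro s hs
  have hTp : Tp ⊆ T := hpart ▸ subset_union_left
  have himp := Vval_mul_one_add_influence_le hTp hπ0 hP hV0 hs
  refine ⟨himp, ?_, sum_nonneg fun a _ => mul_nonneg ((hπ0 s hs).1 a) (sq_nonneg _)⟩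
  rw [ge_iff_le, le_div_iff₀ (hV0 s hs)]
  linarith

/-- **Statewise policy improvement.**
Episodic-MDP setup: `S` finite with terminal set `𝒯 = 𝒯₊ ∪ 𝒯₋` (disjoint), `A`
finite nonempty, transition kernel `P` (a pmf in its last argument) absorbing on
`𝒯`, every Markov policy reaching `𝒯` almost surely from every state, and
behavior policy `π0` with `V_{π0}(s) > 0` at every nonterminal `s`.

For every nonterminal state `s`, `V_{π₊}(s) ≥ V_{π0}(s)·(1 + I(s))`;
equivalently, `(V_{π₊}(s) − V_{π0}(s))/V_{π0}(s) ≥ I(s) ≥ 0`. -/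
theorem statewise_policy_improvement
    {S A : Type*} [Fintype S] [DecidableEq S] [Fintype A] [Nonempty A]
    (T Tp Tm : Finset S) (hpart : Tp ∪ Tm = T) (hdisj : Disjoint Tp Tm)
    (P : S → A → S → ℝ) (hP : ∀ s a, IsPMFOn (P s a))
    (habs : ∀ s ∈ T, ∀ a, P s a s = 1)
    (hterm : ∀ π : S → A → ℝ, (∀ s ∉ T, IsPMFOn (π s)) →
      ∀ s : S, trajMeasure T P π (pointMass s) Set.univ = 1)
    (π0 : S → A → ℝ) (hπ0 : ∀ s ∉ T, IsPMFOn (π0 s))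
    (hV0 : ∀ s ∉ T, 0 < Vval T Tp P π0 s) :
    ∀ s ∉ T,
      Vval T Tp P (piPlus T Tp P π0) s
          ≥ Vval T Tp P π0 s * (1 + influence T Tp P π0 s)
      ∧ (Vval T Tp P (piPlus T Tp P π0) s - Vval T Tp P π0 s) / Vval T Tp P π0 s
          ≥ influence T Tp P π0 s
      ∧ influence T Tp P π0 s ≥ 0 :=
  statewise_policy_improvement_general T Tp Tm hpart P hP π0 hπ0 hV0
end

section
/- Success-conditioned occupancy formula: for every Markov policy π with ρ(π) > 0 and every nonterminal state s with d_π(s) < ∞, one has ρ(π)·d⁺_π(s) = V_π(s)·d_π(s); that is, d⁺_π(s) = (V_π(s)/ρ(π))·d_π(s). -/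
open MeasureTheory
open scoped ENNReal

variable {S A : Type*}

/-!
Trajectories are finite paths weighted by `pathWeight`, which vanishes unless the path meets the
terminal set exactly at its last state. Splitting every path of length at least `t` into its first
`t` steps and the rest gives the Markov property: on `{X_t = s}`, `s` nonterminal, the shifted path
`(X_{t+u})_u` has law `ℙ_s`, so `ℙ_μ(X_t = s, X_{t+·} ∈ E) = ℙ_μ(X_t = s) · ℙ_s(E)`. A path of
positive weight that is at a nonterminal state at time `t` has not met `𝒯₊` before `t`, so success
is an event of the shifted path, and `ℙ_μ(X_t = s, success) = ℙ_μ(X_t = s) · V_π(s)`. Summing over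
`t` gives `ρ(π) · d⁺_π(s) = V_π(s) · d_π(s)`, because `ρ(π) · 𝔼[· | success] = 𝔼[· ; success]`.
-/

namespace Traj

def shift (t : ℕ) (ω : Traj S A) : Traj S A := ⟨stateAt ω t, ω.steps.drop t⟩

end Traj

@[simp]
lemma lastState_mk_nil (s : S) : lastState (⟨s, []⟩ : Traj S A) = s := rfl

@[simp]
lemma lastState_mk_cons (s : S) (a : A) (s' : S) (l : List (A × S)) :
    lastState (⟨s, (a, s') :: l⟩ : Traj S A) = lastState ⟨s', l⟩ := rfl

@[simp]
lemma stateAt_mk_zero (s : S) (l : List (A × S)) : stateAt (⟨s, l⟩ : Traj S A) 0 = s := rfl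

@[simp]
lemma stateAt_mk_cons_succ (s : S) (a : A) (s' : S) (l : List (A × S)) (u : ℕ) :
    stateAt (⟨s, (a, s') :: l⟩ : Traj S A) (u + 1) = stateAt ⟨s', l⟩ u := by
  simp [stateAt]

lemma stateAt_of_length_le (ω : Traj S A) {t : ℕ} (h : ω.steps.length ≤ t) :
    stateAt ω t = lastState ω := by
  obtain ⟨s, l⟩ := ω
  induction l generalizing s t with
  | nil => cases t <;> rfl
  | cons p l ih =>
    obtain ⟨a, s'⟩ := p
    obtain ⟨u, rfl⟩ : ∃ u, t = u + 1 := Nat.exists_eq_add_one.mpr (by simp at h; omega)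
    simpa using ih s' (by simpa using h)

lemma stateAt_shift (ω : Traj S A) (t u : ℕ) :
    stateAt (ω.shift t) u = stateAt ω (t + u) := by
  obtain ⟨s, l⟩ := ω
  induction l generalizing s t with
  | nil => simp [Traj.shift, stateAt_of_length_le]
  | cons p l ih =>
    obtain ⟨a, s'⟩ := p
    cases t with
    | zero => simp [Traj.shift]
    | succ t =>
      rw [Nat.add_right_comm, stateAt_mk_cons_succ, ← ih]
      simp [Traj.shift]

lemma shift_mk_append_length (s : S) (l₁ l₂ : List (A × S)) :
    (⟨s, l₁ ++ l₂⟩ : Traj S A).shift l₁.length = ⟨lastState ⟨s, l₁⟩, l₂⟩ := by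
  induction l₁ generalizing s with
  | nil => rfl
  | cons p l₁ ih =>
    obtain ⟨a, s'⟩ := p
    simpa [Traj.shift] using ih s'

lemma stateAt_mk_append_of_length_eq {s : S} {l₁ : List (A × S)} {t : ℕ} (h : l₁.length = t)
    (l₂ : List (A × S)) : stateAt (⟨s, l₁ ++ l₂⟩ : Traj S A) t = lastState ⟨s, l₁⟩ := by
  subst h
  simpa [shift_mk_append_length] using (stateAt_shift ⟨s, l₁ ++ l₂⟩ l₁.length 0).symm

section Weights

variable [DecidableEq S] (T : Finset S) (P : S → A → S → ℝ) (π : S → A → ℝ)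

def prefixWeight : S → List (A × S) → ℝ
  | _, [] => 1
  | s, (a, s') :: l => if s ∈ T then 0 else π s a * P s a s' * prefixWeight s' l

lemma pathWeight_eq_ite (s : S) (l : List (A × S)) :
    pathWeight T P π s l
      = if lastState (⟨s, l⟩ : Traj S A) ∈ T then prefixWeight T P π s l else 0 := by
  induction l generalizing s with
  | nil => by_cases h : s ∈ T <;> simp [pathWeight, prefixWeight, h]
  | cons p l ih =>
    obtain ⟨a, s'⟩ := p
    simp only [pathWeight, prefixWeight, ih, lastState_mk_cons]
    split_ifs <;> ring

lemma prefixWeight_append (s : S) (l₁ l₂ : List (A × S)) :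
    prefixWeight T P π s (l₁ ++ l₂)
      = prefixWeight T P π s l₁ * prefixWeight T P π (lastState ⟨s, l₁⟩) l₂ := by
  induction l₁ generalizing s with
  | nil => simp [prefixWeight]
  | cons p l₁ ih =>
    obtain ⟨a, s'⟩ := p
    simp only [List.cons_append, prefixWeight, ih, lastState_mk_cons]
    split_ifs <;> ring

lemma pathWeight_append (s : S) (l₁ l₂ : List (A × S)) :
    pathWeight T P π s (l₁ ++ l₂)
      = prefixWeight T P π s l₁ * pathWeight T P π (lastState ⟨s, l₁⟩) l₂ := by
  have hlast : lastState (⟨s, l₁ ++ l₂⟩ : Traj S A) = lastState ⟨lastState ⟨s, l₁⟩, l₂⟩ := by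
    simp [lastState, List.foldl_append]
  rw [pathWeight_eq_ite, pathWeight_eq_ite, hlast, prefixWeight_append]
  split_ifs <;> ring

variable {T P π}

lemma pathWeight_nonneg (hP : ∀ s a s', 0 ≤ P s a s') (hπ : ∀ s ∉ T, ∀ a, 0 ≤ π s a)
    (s : S) (l : List (A × S)) : 0 ≤ pathWeight T P π s l := by
  induction l generalizing s with
  | nil => unfold pathWeight; positivity
  | cons p l ih =>
    obtain ⟨a, s'⟩ := p
    unfold pathWeight
    split_ifs with hs
    · rfl
    · have := hπ s hs a
      have := hP s a s'
      have := ih s'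
      positivity

lemma stateAt_mem_iff_length_le {ω : Traj S A} (hω : pathWeight T P π ω.init ω.steps ≠ 0)
    (t : ℕ) : stateAt ω t ∈ T ↔ ω.steps.length ≤ t := by
  obtain ⟨s, l⟩ := ω
  induction l generalizing s t with
  | nil =>
    simp only [pathWeight, ne_eq, ite_eq_right_iff, not_forall] at hω
    cases t <;> simpa [stateAt] using hω.1
  | cons p l ih =>
    obtain ⟨a, s'⟩ := p
    simp only [pathWeight] at hω
    split_ifs at hω with hs
    · exact absurd rfl hω
    cases t with
    | zero => simpa using hs
    | succ t => simpa using ih t s' (right_ne_zero_of_mul hω)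

end Weights

lemma tsum_traj_eq_tsum_tsum (f : Traj S A → ℝ≥0∞) :
    ∑' ω, f ω = ∑' (s : S) (l : List (A × S)), f ⟨s, l⟩ := by
  let e : S × List (A × S) ≃ Traj S A :=
    ⟨fun p => ⟨p.1, p.2⟩, fun ω => (ω.init, ω.steps), fun _ => rfl, fun _ => rfl⟩
  rw [← e.tsum_eq]
  exact ENNReal.tsum_prod (f := fun s l => f ⟨s, l⟩)

lemma tsum_traj_eq_tsum_append (t : ℕ) (f : Traj S A → ℝ≥0∞)
    (hf : ∀ ω : Traj S A, ω.steps.length < t → f ω = 0) :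
    ∑' ω, f ω = ∑' (p : S × {l : List (A × S) // l.length = t}) (l₂ : List (A × S)),
      f ⟨p.1, p.2.1 ++ l₂⟩ := by
  let g : (S × {l : List (A × S) // l.length = t}) × List (A × S) → Traj S A :=
    fun q => ⟨q.1.1, q.1.2.1 ++ q.2⟩
  have hg : g.Injective := by
    rintro ⟨⟨s, l₁, h₁⟩, l₂⟩ ⟨⟨s', l₁', h₁'⟩, l₂'⟩ h
    simp only [g, Traj.mk.injEq] at h
    obtain ⟨rfl, hl⟩ := h
    obtain ⟨rfl, rfl⟩ := List.append_inj hl (h₁.trans h₁'.symm)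
    rfl
  have hsupp : Function.support f ⊆ Set.range g := by
    intro ω hω
    have hlen : t ≤ ω.steps.length := not_lt.mp fun h => hω (hf ω h)
    exact ⟨⟨⟨ω.init, ω.steps.take t, by simpa using hlen⟩, ω.steps.drop t⟩,
      by simp [g, List.take_append_drop]⟩
  rw [← hg.tsum_eq hsupp]
  exact ENNReal.tsum_prod
    (f := fun (p : S × {l : List (A × S) // l.length = t}) l₂ => f ⟨p.1, p.2.1 ++ l₂⟩)

section Measure

variable [DecidableEq S] {T : Finset S} {P : S → A → S → ℝ} {π : S → A → ℝ} {μ : S → ℝ}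

lemma trajMeasure_apply (E : Set (Traj S A)) :
    trajMeasure T P π μ E
      = ∑' ω, ENNReal.ofReal (μ ω.init * pathWeight T P π ω.init ω.steps) * E.indicator 1 ω := by
  rw [trajMeasure, Measure.sum_apply _ MeasurableSpace.measurableSet_top]
  simp_rw [Measure.smul_apply, Measure.dirac_apply' _ MeasurableSpace.measurableSet_top,
    smul_eq_mul]

lemma trajMeasure_congr {E F : Set (Traj S A)}
    (h : ∀ ω, 0 < μ ω.init * pathWeight T P π ω.init ω.steps → (ω ∈ E ↔ ω ∈ F)) :
    trajMeasure T P π μ E = trajMeasure T P π μ F := by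
  rw [trajMeasure_apply, trajMeasure_apply]
  refine tsum_congr fun ω => ?_
  rcases le_or_gt (μ ω.init * pathWeight T P π ω.init ω.steps) 0 with hw | hw
  · simp [ENNReal.ofReal_of_nonpos hw]
  · rw [Set.indicator_eq_indicator (h ω hw) rfl]

lemma trajMeasure_eq_sum_pointMass (hμ : ∀ s, 0 ≤ μ s) :
    trajMeasure T P π μ
      = Measure.sum fun s => ENNReal.ofReal (μ s) • trajMeasure T P π (pointMass s) := by
  ext E -
  rw [Measure.sum_apply _ MeasurableSpace.measurableSet_top, trajMeasure_apply,
    tsum_traj_eq_tsum_tsum]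
  refine tsum_congr fun s => ?_
  rw [Measure.smul_apply, smul_eq_mul, trajMeasure_apply, tsum_traj_eq_tsum_tsum,
    tsum_eq_single s fun s' hs' => by simp [pointMass, hs'], ← ENNReal.tsum_mul_left]
  refine tsum_congr fun l => ?_
  simp [pointMass, ENNReal.ofReal_mul (hμ s), mul_assoc]

lemma trajMeasure_univ [Fintype S] (hμ : IsPMFOn μ)
    (hterm : ∀ s, trajMeasure T P π (pointMass s) Set.univ = 1) :
    trajMeasure T P π μ Set.univ = 1 := by
  rw [trajMeasure_eq_sum_pointMass hμ.1, Measure.sum_apply _ MeasurableSpace.measurableSet_top]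
  simp only [Measure.smul_apply, hterm, smul_eq_mul, mul_one, tsum_fintype]
  rw [← ENNReal.ofReal_sum_of_nonneg fun s _ => hμ.1 s, hμ.2, ENNReal.ofReal_one]

lemma trajMeasure_pointMass_apply (s : S) (E : Set (Traj S A)) :
    trajMeasure T P π (pointMass s) E
      = ∑' l, ENNReal.ofReal (pathWeight T P π s l) * E.indicator 1 ⟨s, l⟩ := by
  rw [trajMeasure_apply, tsum_traj_eq_tsum_tsum,
    tsum_eq_single s fun s' hs' => by simp [pointMass, hs']]
  simp [pointMass]

lemma exists_trajMeasure_stateAt_inter_shift_preimage (hP : ∀ s a s', 0 ≤ P s a s')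
    (hπ : ∀ s ∉ T, ∀ a, 0 ≤ π s a) {s : S} (hs : s ∉ T) (t : ℕ) :
    ∃ c : ℝ≥0∞, ∀ E : Set (Traj S A),
      trajMeasure T P π μ ({ω | stateAt ω t = s} ∩ Traj.shift t ⁻¹' E)
        = c * trajMeasure T P π (pointMass s) E := by
  refine ⟨∑' p : S × {l : List (A × S) // l.length = t},
    if lastState ⟨p.1, p.2.1⟩ = s then ENNReal.ofReal (μ p.1 * prefixWeight T P π p.1 p.2.1)
    else 0, fun E => ?_⟩
  have hshort : ∀ ω : Traj S A, ω.steps.length < t →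
      ENNReal.ofReal (μ ω.init * pathWeight T P π ω.init ω.steps)
        * ({ω | stateAt ω t = s} ∩ Traj.shift t ⁻¹' E).indicator 1 ω = 0 := by
    rintro ⟨s₀, l⟩ hlt
    by_cases hω : stateAt ⟨s₀, l⟩ t = s
    · have hlast : lastState ⟨s₀, l⟩ ∉ T := by
        rwa [← stateAt_of_length_le _ hlt.le, hω]
      simp [pathWeight_eq_ite, hlast]
    · simp [hω]
  rw [trajMeasure_apply, tsum_traj_eq_tsum_append t _ hshort, ← ENNReal.tsum_mul_right]
  refine tsum_congr fun p => ?_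
  obtain ⟨s₀, l₁, hl₁⟩ := p
  have hmem : ∀ l₂, (⟨s₀, l₁ ++ l₂⟩ : Traj S A) ∈ {ω | stateAt ω t = s} ∩ Traj.shift t ⁻¹' E
      ↔ lastState ⟨s₀, l₁⟩ = s ∧ (⟨lastState ⟨s₀, l₁⟩, l₂⟩ : Traj S A) ∈ E := by
    intro l₂
    subst hl₁
    simp [stateAt_mk_append_of_length_eq rfl, shift_mk_append_length]
  by_cases hlast : lastState ⟨s₀, l₁⟩ = s
  · simp only [hlast, if_true, trajMeasure_pointMass_apply, ← ENNReal.tsum_mul_left]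
    refine tsum_congr fun l₂ => ?_
    rw [pathWeight_append, hlast, ← mul_assoc, ENNReal.ofReal_mul' (pathWeight_nonneg hP hπ _ _),
      mul_assoc]
    congr 2
    exact Set.indicator_eq_indicator ((hmem l₂).trans (by simp only [hlast, true_and])) rfl
  · simp only [hlast, if_false, zero_mul]
    exact ENNReal.tsum_eq_zero.mpr fun l₂ => by
      rw [Set.indicator_of_notMem fun h => hlast ((hmem l₂).mp h).1, mul_zero]

lemma trajMeasure_stateAt_inter_shift_preimage (hP : ∀ s a s', 0 ≤ P s a s')
    (hπ : ∀ s ∉ T, ∀ a, 0 ≤ π s a) {s : S} (hs : s ∉ T)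
    (hterm : trajMeasure T P π (pointMass s) Set.univ = 1) (t : ℕ) (E : Set (Traj S A)) :
    trajMeasure T P π μ ({ω | stateAt ω t = s} ∩ Traj.shift t ⁻¹' E)
      = trajMeasure T P π μ {ω | stateAt ω t = s} * trajMeasure T P π (pointMass s) E := by
  obtain ⟨c, hc⟩ := exists_trajMeasure_stateAt_inter_shift_preimage (μ := μ) hP hπ hs t
  have hc_univ := hc Set.univ
  rw [Set.preimage_univ, Set.inter_univ, hterm, mul_one] at hc_univ
  rw [hc, hc_univ]

end Measure

lemma mem_successEvent_iff_shift_mem [DecidableEq S] {T Tp : Finset S} {P : S → A → S → ℝ}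
    {π : S → A → ℝ} (hTp : Tp ⊆ T) {ω : Traj S A} (hω : pathWeight T P π ω.init ω.steps ≠ 0)
    {t : ℕ} (ht : stateAt ω t ∉ T) :
    ω ∈ SuccessEvent Tp ↔ ω.shift t ∈ SuccessEvent Tp := by
  simp only [SuccessEvent, Set.mem_ofPred_eq, stateAt_shift]
  refine ⟨fun ⟨v, hv⟩ => ⟨v - t, ?_⟩, fun ⟨u, hu⟩ => ⟨t + u, hu⟩⟩
  have hv_len := (stateAt_mem_iff_length_le hω v).mp (hTp hv)
  have ht_len := mt (stateAt_mem_iff_length_le hω t).mpr ht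
  rwa [Nat.add_sub_cancel' (by omega)]

lemma trajMeasure_stateAt_inter_successEvent [DecidableEq S] {T Tp : Finset S}
    {P : S → A → S → ℝ} {π : S → A → ℝ} {μ : S → ℝ} (hTp : Tp ⊆ T)
    (hP : ∀ s a s', 0 ≤ P s a s') (hπ : ∀ s ∉ T, ∀ a, 0 ≤ π s a) {s : S} (hs : s ∉ T)
    (hterm : trajMeasure T P π (pointMass s) Set.univ = 1) (t : ℕ) :
    trajMeasure T P π μ ({ω | stateAt ω t = s} ∩ SuccessEvent Tp)
      = trajMeasure T P π μ {ω | stateAt ω t = s}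
          * trajMeasure T P π (pointMass s) (SuccessEvent Tp) := by
  rw [← trajMeasure_stateAt_inter_shift_preimage hP hπ hs hterm]
  refine trajMeasure_congr fun ω hw => and_congr_right fun hωt => ?_
  exact mem_successEvent_iff_shift_mem hTp (right_ne_zero_of_mul hw.ne') (hωt ▸ hs)

lemma measure_mul_lintegral_cond {Ω : Type*} [MeasurableSpace Ω] (ν : Measure Ω) {B : Set Ω}
    (h₀ : ν B ≠ 0) (h_top : ν B ≠ ⊤) (f : Ω → ℝ≥0∞) :
    ν B * ∫⁻ ω, f ω ∂(ProbabilityTheory.cond ν B) = ∫⁻ ω in B, f ω ∂ν := by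
  rw [ProbabilityTheory.cond, lintegral_smul_measure, smul_eq_mul, ← mul_assoc,
    ENNReal.mul_inv_cancel h₀ h_top, one_mul]

lemma lintegral_tsum_ite_stateAt [DecidableEq S] (ν : Measure (Traj S A)) (s : S) :
    ∫⁻ ω, (∑' t : ℕ, if stateAt ω t = s then 1 else 0) ∂ν = ∑' t, ν {ω | stateAt ω t = s} := by
  rw [lintegral_tsum fun _ => measurable_from_top.aemeasurable]
  refine tsum_congr fun t => ?_
  rw [← lintegral_indicator_one MeasurableSpace.measurableSet_top]
  congr with ω
  simp [Set.indicator_apply]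

theorem success_conditioned_occupancy_formula_general
    {S A : Type*} [Fintype S] [DecidableEq S] [Fintype A]
    (T Tp Tm : Finset S) (hpart : Tp ∪ Tm = T)
    (P : S → A → S → ℝ) (hP : ∀ s a, IsPMFOn (P s a))
    (hterm : ∀ π : S → A → ℝ, (∀ s ∉ T, IsPMFOn (π s)) →
      ∀ s : S, trajMeasure T P π (pointMass s) Set.univ = 1)
    (μ : S → ℝ) (hμ : IsPMFOn μ)
    (π : S → A → ℝ) (hπ : ∀ s ∉ T, IsPMFOn (π s))
    (hρ : 0 < trajMeasure T P π μ (SuccessEvent Tp))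
    (s : S) (hs : s ∉ T) :
    trajMeasure T P π μ (SuccessEvent Tp) * dPlusOcc T Tp P π μ s
        = ENNReal.ofReal (Vval T Tp P π s) * dOcc T P π μ s
      ∧ dPlusOcc T Tp P π μ s
        = ENNReal.ofReal (Vval T Tp P π s) * dOcc T P π μ s
            / trajMeasure T P π μ (SuccessEvent Tp) := by
  have hTp : Tp ⊆ T := hpart ▸ Finset.subset_union_left
  have hterm_π := hterm π hπ
  have : IsProbabilityMeasure (trajMeasure T P π μ) := ⟨trajMeasure_univ hμ hterm_π⟩
  have : IsProbabilityMeasure (trajMeasure T P π (pointMass s)) := ⟨hterm_π s⟩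
  have hV : ENNReal.ofReal (Vval T Tp P π s)
      = trajMeasure T P π (pointMass s) (SuccessEvent Tp) :=
    ENNReal.ofReal_toReal (measure_ne_top _ _)
  have key : trajMeasure T P π μ (SuccessEvent Tp) * dPlusOcc T Tp P π μ s
      = ENNReal.ofReal (Vval T Tp P π s) * dOcc T P π μ s := by
    rw [dPlusOcc, measure_mul_lintegral_cond _ hρ.ne' (measure_ne_top _ _),
      lintegral_tsum_ite_stateAt, dOcc, ← ENNReal.tsum_mul_left]
    refine tsum_congr fun t => ?_
    rw [Measure.restrict_apply MeasurableSpace.measurableSet_top,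
      trajMeasure_stateAt_inter_successEvent hTp (fun s a => (hP s a).1)
        (fun s hs => (hπ s hs).1) hs (hterm_π s), hV, mul_comm]
  exact ⟨key, (ENNReal.eq_div_iff hρ.ne' (measure_ne_top _ _)).mpr key⟩

/-- **Success-conditioned occupancy formula.**
Episodic-MDP setup: `S` finite with terminal set `𝒯 = 𝒯₊ ∪ 𝒯₋` (disjoint), `A`
finite nonempty, transition kernel `P` (a pmf in its last argument) absorbing on
`𝒯`, every Markov policy reaching `𝒯` almost surely from every state, and initial
distribution `μ` supported on nonterminal states.

For every Markov policy `π` with `ρ(π) > 0` and every nonterminal state `s` with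
`d_π(s) < ∞`, one has `ρ(π)·d⁺_π(s) = V_π(s)·d_π(s)`; that is,
`d⁺_π(s) = (V_π(s)/ρ(π))·d_π(s)`. -/
theorem success_conditioned_occupancy_formula
    {S A : Type*} [Fintype S] [DecidableEq S] [Fintype A] [Nonempty A]
    (T Tp Tm : Finset S) (hpart : Tp ∪ Tm = T) (hdisj : Disjoint Tp Tm)
    (P : S → A → S → ℝ) (hP : ∀ s a, IsPMFOn (P s a))
    (habs : ∀ s ∈ T, ∀ a, P s a s = 1)
    (hterm : ∀ π : S → A → ℝ, (∀ s ∉ T, IsPMFOn (π s)) →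
      ∀ s : S, trajMeasure T P π (pointMass s) Set.univ = 1)
    (μ : S → ℝ) (hμ : IsPMFOn μ) (hμT : ∀ s ∈ T, μ s = 0)
    (π : S → A → ℝ) (hπ : ∀ s ∉ T, IsPMFOn (π s))
    (hρ : 0 < trajMeasure T P π μ (SuccessEvent Tp))
    (s : S) (hs : s ∉ T) (hd : dOcc T P π μ s ≠ ⊤) :
    trajMeasure T P π μ (SuccessEvent Tp) * dPlusOcc T Tp P π μ s
        = ENNReal.ofReal (Vval T Tp P π s) * dOcc T P π μ s
      ∧ dPlusOcc T Tp P π μ s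
        = ENNReal.ofReal (Vval T Tp P π s) * dOcc T P π μ s
            / trajMeasure T P π μ (SuccessEvent Tp) :=
  success_conditioned_occupancy_formula_general T Tp Tm hpart P hP hterm μ hμ π hπ hρ s hs
end

section
/- Forward-KL tolerance, lower bound: for every c ∈ (0, ε) there exists δ₀ ∈ (0,1), depending only on c and ε and not on k, such that for all δ ∈ (0, δ₀), the probability mass function π with π(a⋆) = c/log(1/δ) and π(aᵢ) = (1 − c/log(1/δ))/k for i = 1,…,k satisfies KL(π‖π0) ≤ ε. Consequently sup{π(a⋆) : KL(π‖π0) ≤ ε} ≥ c/log(1/δ) for all δ ∈ (0, δ₀). -/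
/-!
With `t = c / log (1/δ)`, both `π` and `π0` spread their remaining mass uniformly over the
common actions, so `KL(π‖π0)` is the binary divergence `t log (t/δ) + (1-t) log ((1-t)/(1-δ))`.
Its first term is at most `t log (1/δ) = c` and its second at most `log (1/(1-δ))`, which is
below `ε - c` once `δ` is small; neither bound involves `k`.
-/

open Real (exp log)

/-- Rare-action behavior policy on the action set `{a⋆, a₁, …, a_k}` (modeled as
`Option (Fin k)`, with `a⋆ = none`): `π0(a⋆) = δ` and `π0(aᵢ) = (1−δ)/k`. -/
noncomputable def rarePi0 (k : ℕ) (δ : ℝ) : Option (Fin k) → ℝ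
  | none => δ
  | some _ => (1 - δ) / k

/-- Forward KL divergence `KL(p‖q) = Σ_x p(x)·log(p(x)/q(x))`
(with the junk-value convention `0·log 0 = 0`, automatic since `Real.log 0 = 0`). -/
noncomputable def klDivFin {α : Type*} [Fintype α] (p q : α → ℝ) : ℝ :=
  ∑ x, p x * Real.log (p x / q x)

/-- The perturbed policy with `π(a⋆) = c/log(1/δ)` and
`π(aᵢ) = (1 − c/log(1/δ))/k`. -/
noncomputable def rarePertKL (k : ℕ) (δ c : ℝ) : Option (Fin k) → ℝ
  | none => c / Real.log (1 / δ)
  | some _ => (1 - c / Real.log (1 / δ)) / k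

theorem IsPMFOn.le_one {α : Type*} [Fintype α] {p : α → ℝ} (hp : IsPMFOn p) (a : α) :
    p a ≤ 1 :=
  hp.2 ▸ Finset.single_le_sum (fun x _ => hp.1 x) (Finset.mem_univ a)

theorem IsPMFOn.le_sSup {α : Type*} [Fintype α] {P : (α → ℝ) → Prop} {π : α → ℝ}
    (hπ : IsPMFOn π) (hP : P π) (a : α) :
    π a ≤ sSup {p : ℝ | ∃ π : α → ℝ, IsPMFOn π ∧ P π ∧ π a = p} := by
  refine le_csSup ⟨1, ?_⟩ ⟨π, hπ, hP, rfl⟩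
  rintro _ ⟨ρ, hρ, -, rfl⟩
  exact hρ.le_one a

noncomputable def atomUniformMix (α : Type*) [Fintype α] (s : ℝ) : Option α → ℝ
  | none => s
  | some _ => (1 - s) / Fintype.card α

theorem rarePi0_eq_atomUniformMix (k : ℕ) (δ : ℝ) :
    rarePi0 k δ = atomUniformMix (Fin k) δ := by
  funext x
  cases x <;> simp [rarePi0, atomUniformMix]

theorem rarePertKL_eq_atomUniformMix (k : ℕ) (δ c : ℝ) :
    rarePertKL k δ c = atomUniformMix (Fin k) (c / log (1 / δ)) := by
  funext x
  cases x <;> simp [rarePertKL, atomUniformMix]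

noncomputable def binaryKL (s r : ℝ) : ℝ :=
  s * log (s / r) + (1 - s) * log ((1 - s) / (1 - r))

section AtomUniformMix

variable {α : Type*} [Fintype α] [Nonempty α]

theorem isPMFOn_atomUniformMix {s : ℝ} (hs0 : 0 ≤ s) (hs1 : s ≤ 1) :
    IsPMFOn (atomUniformMix α s) := by
  have hcard : (Fintype.card α : ℝ) ≠ 0 := by positivity
  refine ⟨fun x => ?_, ?_⟩
  · cases x
    · exact hs0
    · exact div_nonneg (by linarith) (Nat.cast_nonneg _)
  · simp only [Fintype.sum_option, atomUniformMix, Finset.sum_const, Finset.card_univ,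
      nsmul_eq_mul]
    field_simp
    ring

theorem klDivFin_atomUniformMix (s r : ℝ) :
    klDivFin (atomUniformMix α s) (atomUniformMix α r) = binaryKL s r := by
  have hcard : (Fintype.card α : ℝ) ≠ 0 := by positivity
  simp only [klDivFin, Fintype.sum_option, atomUniformMix, Finset.sum_const, Finset.card_univ,
    nsmul_eq_mul, div_div_div_cancel_right₀ hcard, binaryKL]
  field_simp

end AtomUniformMix

theorem mul_log_div_le_mul_log_one_div {a b : ℝ} (ha0 : 0 ≤ a) (ha1 : a ≤ 1) (hb : 0 < b) :
    a * log (a / b) ≤ a * log (1 / b) := by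
  rcases ha0.eq_or_lt with rfl | ha
  · simp
  · gcongr

theorem binaryKL_le {s r : ℝ} (hs0 : 0 ≤ s) (hs1 : s ≤ 1) (hr0 : 0 < r) (hr1 : r < 1) :
    binaryKL s r ≤ s * log (1 / r) + log (1 / (1 - r)) := by
  have hlog : 0 ≤ log (1 / (1 - r)) := Real.log_nonneg (by rw [le_div_iff₀] <;> linarith)
  calc binaryKL s r ≤ s * log (1 / r) + (1 - s) * log (1 / (1 - r)) :=
        add_le_add (mul_log_div_le_mul_log_one_div hs0 hs1 hr0)
          (mul_log_div_le_mul_log_one_div (by linarith) (by linarith) (by linarith))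
    _ ≤ s * log (1 / r) + log (1 / (1 - r)) := by
        gcongr
        exact mul_le_of_le_one_left hlog (by linarith)

theorem lt_log_one_div_of_lt_exp_neg {c δ : ℝ} (hδ : 0 < δ) (h : δ < exp (-c)) :
    c < log (1 / δ) := by
  rw [one_div, Real.log_inv, lt_neg, Real.log_lt_iff_lt_exp hδ]
  exact h

theorem log_one_div_one_sub_lt {a δ : ℝ} (h : δ < 1 - exp (-a)) :
    log (1 / (1 - δ)) < a := by
  have hpos : 0 < 1 - δ := by linarith [Real.exp_pos (-a)]
  rw [one_div, Real.log_inv, neg_lt, Real.lt_log_iff_exp_lt hpos]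
  linarith

theorem kl_rare_action_lower_bound_general
    (ε : ℝ) (c : ℝ) (hc0 : 0 < c) (hc : c < ε) :
    ∃ δ₀ ∈ Set.Ioo (0 : ℝ) 1, ∀ k : ℕ, 2 ≤ k → ∀ δ ∈ Set.Ioo (0 : ℝ) δ₀,
      (IsPMFOn (rarePertKL k δ c) ∧ klDivFin (rarePertKL k δ c) (rarePi0 k δ) ≤ ε)
      ∧ c / Real.log (1 / δ)
          ≤ sSup {p : ℝ | ∃ π : Option (Fin k) → ℝ,
              IsPMFOn π ∧ klDivFin π (rarePi0 k δ) ≤ ε ∧ π none = p} := by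
  have hexp : exp (-(ε - c)) < 1 := Real.exp_lt_one_iff.mpr (by linarith)
  refine ⟨min (1 - exp (-(ε - c))) (exp (-c)),
    ⟨lt_min (by linarith) (Real.exp_pos _),
      (min_le_right _ _).trans_lt (Real.exp_lt_one_iff.mpr (by linarith))⟩,
    fun k hk δ ⟨hδ0, hδ⟩ => ?_⟩
  have hδε : δ < 1 - exp (-(ε - c)) := hδ.trans_le (min_le_left _ _)
  have hδ1 : δ < 1 := by linarith [Real.exp_pos (-(ε - c))]
  have hL : c < log (1 / δ) := lt_log_one_div_of_lt_exp_neg hδ0 (hδ.trans_le (min_le_right _ _))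
  have hLpos : 0 < log (1 / δ) := hc0.trans hL
  have ht1 : c / log (1 / δ) ≤ 1 := (div_le_one hLpos).mpr hL.le
  have : Nonempty (Fin k) := ⟨⟨0, by omega⟩⟩
  have hpmf : IsPMFOn (rarePertKL k δ c) := by
    rw [rarePertKL_eq_atomUniformMix]
    exact isPMFOn_atomUniformMix (by positivity) ht1
  have hkl : klDivFin (rarePertKL k δ c) (rarePi0 k δ) ≤ ε := by
    rw [rarePertKL_eq_atomUniformMix, rarePi0_eq_atomUniformMix, klDivFin_atomUniformMix]
    calc binaryKL (c / log (1 / δ)) δ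
        ≤ c / log (1 / δ) * log (1 / δ) + log (1 / (1 - δ)) :=
          binaryKL_le (by positivity) ht1 hδ0 hδ1
      _ = c + log (1 / (1 - δ)) := by rw [div_mul_cancel₀ c hLpos.ne']
      _ ≤ ε := by linarith [log_one_div_one_sub_lt hδε]
  exact ⟨⟨hpmf, hkl⟩, hpmf.le_sSup hkl none⟩

/-- **Forward-KL tolerance for a rare action, lower bound.**
For every `c ∈ (0, ε)` there exists `δ₀ ∈ (0,1)`, depending only on `c` and `ε`
and not on `k`, such that for all `k ≥ 2` and all `δ ∈ (0, δ₀)`, the probability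
mass function `π` with `π(a⋆) = c/log(1/δ)` and `π(aᵢ) = (1 − c/log(1/δ))/k`
satisfies `KL(π‖π0) ≤ ε`.  Consequently
`sup{π(a⋆) : π pmf, KL(π‖π0) ≤ ε} ≥ c/log(1/δ)`. -/
theorem kl_rare_action_lower_bound
    (ε : ℝ) (hε : 0 < ε) (c : ℝ) (hc0 : 0 < c) (hc : c < ε) :
    ∃ δ₀ ∈ Set.Ioo (0 : ℝ) 1, ∀ k : ℕ, 2 ≤ k → ∀ δ ∈ Set.Ioo (0 : ℝ) δ₀,
      (IsPMFOn (rarePertKL k δ c) ∧ klDivFin (rarePertKL k δ c) (rarePi0 k δ) ≤ ε)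
      ∧ c / Real.log (1 / δ)
          ≤ sSup {p : ℝ | ∃ π : Option (Fin k) → ℝ,
              IsPMFOn π ∧ klDivFin π (rarePi0 k δ) ≤ ε ∧ π none = p} :=
  kl_rare_action_lower_bound_general ε c hc0 hc
end
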